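/- arXiv:2203.10687 — 4 statements merged into one kernel-verified Lean document; each statement's English description precedes it below -/
import Mathlib

section
/- Let Z : {0,1,…,n} × Ω → ℝ be a martingale and let ε > 0. Suppose E λ̄(Z_n) − E λ̄(Z_0) < (1/6) ε³ exp(−(3/ε) · max(E|Z_0|, E|Z_n|)). Then P( max_{0 ≤ k ≤ n} |Z_k − Z_0| > ε ) < ε. -/
/-!
Write `ℓ` for the derivative of `λ̄` and `D_k = λ̄(Z_k) - λ̄(Z_0) - ℓ(Z_0) (Z_k - Z_0)` for the
Bregman divergence of `λ̄` from `Z_0` to `Z_k`. Convexity of `λ̄`, together with the martingale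
property and the boundedness of `ℓ`, makes `D` a nonnegative submartingale with
`E D_n = E λ̄(Z_n) - E λ̄(Z_0)`. Since `λ̄'' = e^{-|v|} ≥ e^{-M}` on `[-M, M]`, we have
`D_k ≥ e^{-M} (Z_k - Z_0)² / 2` as long as `|Z_0|, |Z_k| ≤ M`. Hence the event
`max_k |Z_k - Z_0| > ε` lies in `{max_k |Z_k| ≥ M} ∪ {max_k D_k ≥ e^{-M} ε² / 2}`, and Doob's
maximal inequality for the nonnegative submartingales `|Z|` and `D` bounds the two probabilities
by `E|Z_n| / M` and `2 e^M (E λ̄(Z_n) - E λ̄(Z_0)) / ε²`. For `M` slightly above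
`3 max(E|Z_0|, E|Z_n|) / ε` both are smaller than `ε / 3`.
-/

open MeasureTheory Filter

/-- The special symmetric convex function `λ̄(v) = e^{-|v|} - 1 + |v|`. -/
noncomputable def specialLambda (v : ℝ) : ℝ := Real.exp (-|v|) - 1 + |v|

open Real

def bregmanDiv (f f' : ℝ → ℝ) (a x : ℝ) : ℝ := f x - f a - f' a * (x - a)

theorem bregmanDiv_eq_add (f f' : ℝ → ℝ) (a y x : ℝ) :
    bregmanDiv f f' a x = bregmanDiv f f' a y + bregmanDiv f f' y x + (f' y - f' a) * (x - y) := by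
  unfold bregmanDiv; ring

theorem sq_div_two_le_one_add_sub_one_mul_exp {u : ℝ} (hu : 0 ≤ u) :
    u ^ 2 / 2 ≤ 1 + (u - 1) * exp u := by
  have hmono : MonotoneOn (fun u => 1 + (u - 1) * exp u - u ^ 2 / 2) (Set.Ici 0) := by
    refine monotoneOn_of_deriv_nonneg (convex_Ici 0) (by fun_prop) (by fun_prop) fun x hx => ?_
    rw [interior_Ici, Set.mem_Ioi] at hx
    have hd : HasDerivAt (fun u => 1 + (u - 1) * exp u - u ^ 2 / 2)
        (1 * exp x + (x - 1) * exp x - (2 : ℕ) * x ^ (2 - 1) / 2) x :=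
      ((((hasDerivAt_id' x).sub_const 1).mul (hasDerivAt_exp x)).const_add 1).sub
        ((hasDerivAt_pow 2 x).div_const 2)
    rw [hd.deriv]
    norm_num
    nlinarith [add_one_le_exp x]
  simpa using hmono Set.self_mem_Ici hu hu

theorem exp_neg_max_mul_sq_div_two_le (u : ℝ) :
    exp (-max u 0) * (u ^ 2 / 2) ≤ exp (-u) - 1 + u := by
  rcases le_total 0 u with hu | hu
  · have h := mul_le_mul_of_nonneg_left (sq_div_two_le_one_add_sub_one_mul_exp hu)
      (exp_pos (-u)).le
    rw [max_eq_left hu]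
    have : exp (-u) * exp u = 1 := by rw [← exp_add, neg_add_cancel, exp_zero]
    nlinarith
  · rw [max_eq_right hu, neg_zero, exp_zero, one_mul]
    nlinarith [quadratic_le_exp_of_nonneg (neg_nonneg.2 hu)]

noncomputable def specialLambdaDeriv (a : ℝ) : ℝ :=
  if 0 ≤ a then 1 - exp (-a) else exp a - 1

theorem continuous_specialLambda : Continuous specialLambda := by
  unfold specialLambda; fun_prop

theorem abs_specialLambda_le (v : ℝ) : |specialLambda v| ≤ |v| := by
  have h1 := add_one_le_exp (-|v|)
  have h2 : exp (-|v|) ≤ 1 := exp_le_one_iff.2 (neg_nonpos.2 (abs_nonneg v))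
  unfold specialLambda
  rw [abs_le]
  constructor <;> linarith [abs_nonneg v]

theorem specialLambda_neg (v : ℝ) : specialLambda (-v) = specialLambda v := by
  simp only [specialLambda, abs_neg]

theorem specialLambda_of_nonneg {v : ℝ} (hv : 0 ≤ v) : specialLambda v = exp (-v) - 1 + v := by
  simp only [specialLambda, abs_of_nonneg hv]

theorem measurable_specialLambdaDeriv : Measurable specialLambdaDeriv :=
  Measurable.ite measurableSet_Ici (by fun_prop) (by fun_prop)

theorem abs_specialLambdaDeriv_le_one (a : ℝ) : |specialLambdaDeriv a| ≤ 1 := by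
  unfold specialLambdaDeriv
  split_ifs with ha
  · have : exp (-a) ≤ 1 := exp_le_one_iff.2 (by linarith)
    rw [abs_le]; constructor <;> linarith [exp_pos (-a)]
  · have : exp a ≤ 1 := exp_le_one_iff.2 (by linarith)
    rw [abs_le]; constructor <;> linarith [exp_pos a]

theorem specialLambdaDeriv_neg (a : ℝ) : specialLambdaDeriv (-a) = -specialLambdaDeriv a := by
  unfold specialLambdaDeriv
  rcases lt_trichotomy a 0 with ha | rfl | ha
  · rw [if_pos (by linarith), if_neg (not_le.2 ha), neg_neg]; ring
  · simp
  · rw [if_neg (by linarith), if_pos ha.le]; ring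

theorem specialLambdaDeriv_of_nonneg {a : ℝ} (ha : 0 ≤ a) :
    specialLambdaDeriv a = 1 - exp (-a) := if_pos ha

theorem mul_exp_neg_le_specialLambdaDeriv {a M : ℝ} (ha : 0 ≤ a) (haM : a ≤ M) :
    a * exp (-M) ≤ specialLambdaDeriv a := by
  rw [specialLambdaDeriv_of_nonneg ha]
  have h1 : exp (-M) ≤ exp (-a) := exp_le_exp.2 (neg_le_neg haM)
  have h2 : exp (-a) * exp a = 1 := by rw [← exp_add, neg_add_cancel, exp_zero]
  nlinarith [add_one_le_exp a, exp_pos (-a)]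

theorem bregmanDiv_specialLambda_neg (a x : ℝ) :
    bregmanDiv specialLambda specialLambdaDeriv (-a) (-x) =
      bregmanDiv specialLambda specialLambdaDeriv a x := by
  simp only [bregmanDiv, specialLambda_neg, specialLambdaDeriv_neg]; ring

theorem bregmanDiv_specialLambda_of_nonneg {a x : ℝ} (ha : 0 ≤ a) (hx : 0 ≤ x) :
    bregmanDiv specialLambda specialLambdaDeriv a x =
      exp (-a) * (exp (-(x - a)) - 1 + (x - a)) := by
  have : exp (-x) = exp (-a) * exp (-(x - a)) := by rw [← exp_add]; ring_nf
  rw [bregmanDiv, specialLambda_of_nonneg ha, specialLambda_of_nonneg hx,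
    specialLambdaDeriv_of_nonneg ha, this]
  ring

theorem exp_neg_mul_sq_le_bregmanDiv_specialLambda_of_nonneg {M a x : ℝ} (ha : 0 ≤ a) (hx : 0 ≤ x)
    (haM : a ≤ M) (hxM : x ≤ M) :
    exp (-M) * ((x - a) ^ 2 / 2) ≤ bregmanDiv specialLambda specialLambdaDeriv a x := by
  have hM : exp (-M) ≤ exp (-a) * exp (-max (x - a) 0) := by
    rw [← exp_add, exp_le_exp]
    rcases le_total (x - a) 0 with h | h
    · rw [max_eq_right h]; linarith
    · rw [max_eq_left h]; linarith
  calc exp (-M) * ((x - a) ^ 2 / 2)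
      ≤ exp (-a) * (exp (-max (x - a) 0) * ((x - a) ^ 2 / 2)) := by
        rw [← mul_assoc]; gcongr
    _ ≤ exp (-a) * (exp (-(x - a)) - 1 + (x - a)) := by
        gcongr; exact exp_neg_max_mul_sq_div_two_le _
    _ = bregmanDiv specialLambda specialLambdaDeriv a x :=
        (bregmanDiv_specialLambda_of_nonneg ha hx).symm

theorem exp_neg_mul_sq_le_bregmanDiv_specialLambda_of_nonneg_left {M a x : ℝ} (ha : 0 ≤ a)
    (haM : a ≤ M) (hxM : |x| ≤ M) :
    exp (-M) * ((x - a) ^ 2 / 2) ≤ bregmanDiv specialLambda specialLambdaDeriv a x := by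
  rcases le_total 0 x with hx | hx
  · exact exp_neg_mul_sq_le_bregmanDiv_specialLambda_of_nonneg ha hx haM (le_of_abs_le hxM)
  · -- pass through `0`, where the slope vanishes: `D(a, x) = D(a, 0) + D(0, x) - ℓ(a) x`
    have h0 : specialLambdaDeriv 0 = 0 := by simp [specialLambdaDeriv]
    have ha0 := exp_neg_mul_sq_le_bregmanDiv_specialLambda_of_nonneg ha le_rfl haM (ha.trans haM)
    have h0x := exp_neg_mul_sq_le_bregmanDiv_specialLambda_of_nonneg le_rfl (neg_nonneg.2 hx)
      (ha.trans haM) ((neg_le_abs x).trans hxM)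
    rw [← bregmanDiv_specialLambda_neg, neg_zero, neg_neg] at h0x
    have hslope := mul_le_mul_of_nonneg_right (mul_exp_neg_le_specialLambdaDeriv ha haM)
      (neg_nonneg.2 hx)
    rw [bregmanDiv_eq_add _ _ a 0 x, h0]
    nlinarith

theorem exp_neg_mul_sq_le_bregmanDiv_specialLambda {M a x : ℝ} (haM : |a| ≤ M) (hxM : |x| ≤ M) :
    exp (-M) * ((x - a) ^ 2 / 2) ≤ bregmanDiv specialLambda specialLambdaDeriv a x := by
  rcases le_total 0 a with ha | ha
  · exact exp_neg_mul_sq_le_bregmanDiv_specialLambda_of_nonneg_left ha (le_of_abs_le haM) hxM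
  · rw [← bregmanDiv_specialLambda_neg]
    have := exp_neg_mul_sq_le_bregmanDiv_specialLambda_of_nonneg_left (neg_nonneg.2 ha)
      ((neg_le_abs a).trans haM) ((abs_neg x).trans_le hxM)
    convert this using 2
    ring

theorem bregmanDiv_specialLambda_nonneg (a x : ℝ) :
    0 ≤ bregmanDiv specialLambda specialLambdaDeriv a x :=
  le_trans (by positivity)
    (exp_neg_mul_sq_le_bregmanDiv_specialLambda (le_max_left |a| |x|) (le_max_right |a| |x|))

namespace MeasureTheory

variable {Ω : Type*} {m0 : MeasurableSpace Ω} {P : Measure Ω} {ℱ : Filtration ℕ m0}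
  {Z : ℕ → Ω → ℝ} {C : ℝ}

theorem Martingale.integrable_mul_sub (hZ : Martingale Z ℱ P) {g : Ω → ℝ}
    (hg : AEStronglyMeasurable g P) (hgC : ∀ ω, |g ω| ≤ C) (i k : ℕ) :
    Integrable (g * (Z k - Z i)) P :=
  ((hZ.integrable k).sub (hZ.integrable i)).bdd_mul hg (ae_of_all _ hgC)

theorem Martingale.submartingale_abs (hZ : Martingale Z ℱ P) :
    Submartingale (fun k ω => |Z k ω|) ℱ P := by
  have : (fun k ω => |Z k ω|) = Z ⊔ -Z := funext fun _ => funext fun _ => abs_eq_max_neg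
  rw [this]
  exact hZ.submartingale.sup hZ.neg.submartingale

variable {f f' : ℝ → ℝ}

theorem Martingale.stronglyAdapted_bregmanDiv (hZ : Martingale Z ℱ P) (hf : Measurable f)
    (hf' : Measurable f') :
    StronglyAdapted ℱ (fun k ω => bregmanDiv f f' (Z 0 ω) (Z k ω)) := by
  intro k
  have hk := (hZ.stronglyAdapted k).measurable
  have h0 := ((hZ.stronglyAdapted 0).mono (ℱ.mono k.zero_le)).measurable
  exact (((hf.comp hk).sub (hf.comp h0)).sub ((hf'.comp h0).mul (hk.sub h0))).stronglyMeasurable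

theorem Martingale.integrable_bregmanDiv (hZ : Martingale Z ℱ P) (hf' : Measurable f')
    (hf'C : ∀ x, |f' x| ≤ C) (hfZ : ∀ k, Integrable (fun ω => f (Z k ω)) P) (k : ℕ) :
    Integrable (fun ω => bregmanDiv f f' (Z 0 ω) (Z k ω)) P :=
  ((hfZ k).sub (hfZ 0)).sub (hZ.integrable_mul_sub
    (hf'.comp ((hZ.stronglyAdapted 0).mono (ℱ.le 0)).measurable).aestronglyMeasurable
    (fun _ => hf'C _) 0 k)

variable [IsFiniteMeasure P]

theorem Martingale.condExp_mul_sub_ae_eq_zero (hZ : Martingale Z ℱ P) {i k : ℕ} (hik : i ≤ k)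
    {g : Ω → ℝ} (hg : StronglyMeasurable[ℱ i] g) (hgC : ∀ ω, |g ω| ≤ C) :
    P[g * (Z k - Z i) | ℱ i] =ᵐ[P] 0 := by
  have hincr : P[Z k - Z i | ℱ i] =ᵐ[P] 0 := by
    filter_upwards [condExp_sub (hZ.integrable k) (hZ.integrable i) (ℱ i),
      hZ.condExp_ae_eq hik] with ω h1 h2
    rw [h1, Pi.sub_apply, h2, condExp_of_stronglyMeasurable (ℱ.le i) (hZ.stronglyAdapted i)
      (hZ.integrable i), Pi.zero_apply, sub_self]
  filter_upwards [condExp_mul_of_stronglyMeasurable_left hg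
    (hZ.integrable_mul_sub (hg.mono (ℱ.le i)).aestronglyMeasurable hgC i k)
    ((hZ.integrable k).sub (hZ.integrable i)), hincr] with ω h1 h2
  rw [h1, Pi.mul_apply, h2, Pi.zero_apply, mul_zero]

theorem Martingale.integral_mul_sub_eq_zero (hZ : Martingale Z ℱ P) {i k : ℕ} (hik : i ≤ k)
    {g : Ω → ℝ} (hg : StronglyMeasurable[ℱ i] g) (hgC : ∀ ω, |g ω| ≤ C) :
    ∫ ω, g ω * (Z k ω - Z i ω) ∂P = 0 := by
  rw [← integral_condExp (ℱ.le i)]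
  exact (integral_congr_ae (hZ.condExp_mul_sub_ae_eq_zero hik hg hgC)).trans (integral_zero _ _)

theorem Martingale.submartingale_of_le_add_mul_sub (hZ : Martingale Z ℱ P) {X g : ℕ → Ω → ℝ}
    (hX : StronglyAdapted ℱ X) (hXint : ∀ i, Integrable (X i) P) (hg : StronglyAdapted ℱ g)
    (hgC : ∀ i ω, |g i ω| ≤ C)
    (hle : ∀ i ω, X i ω + g i ω * (Z (i + 1) ω - Z i ω) ≤ X (i + 1) ω) :
    Submartingale X ℱ P := by
  refine submartingale_nat hX hXint fun i => ?_
  have hint := hZ.integrable_mul_sub ((hg i).mono (ℱ.le i)).aestronglyMeasurable (hgC i) i (i + 1)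
  filter_upwards [condExp_mono (m := ℱ i) ((hXint i).add hint) (hXint (i + 1))
      (ae_of_all _ (hle i)), condExp_add (hXint i) hint (ℱ i),
    hZ.condExp_mul_sub_ae_eq_zero i.le_succ (hg i) (hgC i)] with ω hmono hadd hzero
  rw [condExp_of_stronglyMeasurable (ℱ.le i) (hX i) (hXint i)] at hadd
  rw [hadd, Pi.add_apply, hzero, Pi.zero_apply, add_zero] at hmono
  exact hmono

theorem Martingale.submartingale_bregmanDiv (hZ : Martingale Z ℱ P) (hf : Measurable f)
    (hf' : Measurable f') (hf'C : ∀ x, |f' x| ≤ C) (hconv : ∀ a x, 0 ≤ bregmanDiv f f' a x)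
    (hfZ : ∀ k, Integrable (fun ω => f (Z k ω)) P) :
    Submartingale (fun k ω => bregmanDiv f f' (Z 0 ω) (Z k ω)) ℱ P := by
  refine hZ.submartingale_of_le_add_mul_sub (g := fun i ω => f' (Z i ω) - f' (Z 0 ω))
    (C := 2 * C) (hZ.stronglyAdapted_bregmanDiv hf hf') (hZ.integrable_bregmanDiv hf' hf'C hfZ)
    ?_ ?_ ?_
  · intro i
    exact ((hf'.comp (hZ.stronglyAdapted i).measurable).sub
      (hf'.comp ((hZ.stronglyAdapted 0).mono (ℱ.mono i.zero_le)).measurable)).stronglyMeasurable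
  · intro i ω
    linarith [abs_sub (f' (Z i ω)) (f' (Z 0 ω)), hf'C (Z i ω), hf'C (Z 0 ω)]
  · intro i ω
    rw [bregmanDiv_eq_add f f' (Z 0 ω) (Z i ω) (Z (i + 1) ω)]
    linarith [hconv (Z i ω) (Z (i + 1) ω)]

theorem Martingale.integral_bregmanDiv (hZ : Martingale Z ℱ P) (hf' : Measurable f')
    (hf'C : ∀ x, |f' x| ≤ C) (hfZ : ∀ k, Integrable (fun ω => f (Z k ω)) P) (n : ℕ) :
    ∫ ω, bregmanDiv f f' (Z 0 ω) (Z n ω) ∂P = ∫ ω, f (Z n ω) ∂P - ∫ ω, f (Z 0 ω) ∂P := by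
  have hg : StronglyMeasurable[ℱ 0] fun ω => f' (Z 0 ω) :=
    (hf'.comp (hZ.stronglyAdapted 0).measurable).stronglyMeasurable
  have hint : Integrable (fun ω => f' (Z 0 ω) * (Z n ω - Z 0 ω)) P :=
    hZ.integrable_mul_sub (hg.mono (ℱ.le 0)).aestronglyMeasurable (fun _ => hf'C _) 0 n
  simp only [bregmanDiv]
  rw [integral_sub (f := fun ω => f (Z n ω) - f (Z 0 ω)) ((hfZ n).sub (hfZ 0)) hint,
    integral_sub (hfZ n) (hfZ 0), hZ.integral_mul_sub_eq_zero n.zero_le hg (fun _ => hf'C _),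
    sub_zero]

theorem Submartingale.measure_exists_le_le {X : ℕ → Ω → ℝ} (hX : Submartingale X ℱ P)
    (hnonneg : 0 ≤ X) {t : ℝ} (ht : 0 < t) (n : ℕ) :
    P {ω | ∃ k ≤ n, t ≤ X k ω} ≤ ENNReal.ofReal ((∫ ω, X n ω ∂P) / t) := by
  have hdoob := maximal_ineq hX hnonneg (ε := t.toNNReal) n
  rw [Real.coe_toNNReal t ht.le] at hdoob
  have hset : {ω | t ≤ (Finset.range (n + 1)).sup' Finset.nonempty_range_add_one fun k => X k ω}
      = {ω | ∃ k ≤ n, t ≤ X k ω} := by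
    ext ω
    simp [Finset.le_sup'_iff]
  rw [hset] at hdoob
  rw [ENNReal.ofReal_div_of_pos ht, ENNReal.le_div_iff_mul_le (Or.inl (by simpa using ht))
    (Or.inl ENNReal.ofReal_ne_top), mul_comm]
  exact hdoob.trans (ENNReal.ofReal_le_ofReal
    (setIntegral_le_integral (hX.integrable n) (ae_of_all _ (hnonneg n))))

theorem Martingale.measure_exists_lt_abs_sub_le (hZ : Martingale Z ℱ P) {M ε : ℝ} (hM : 0 < M)
    (hε : 0 < ε) (n : ℕ) :
    P {ω | ∃ k ≤ n, ε < |Z k ω - Z 0 ω|} ≤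
      ENNReal.ofReal ((∫ ω, |Z n ω| ∂P) / M) +
        ENNReal.ofReal ((∫ ω, specialLambda (Z n ω) ∂P - ∫ ω, specialLambda (Z 0 ω) ∂P) /
          (exp (-M) * (ε ^ 2 / 2))) := by
  set D : ℕ → Ω → ℝ := fun k ω => bregmanDiv specialLambda specialLambdaDeriv (Z 0 ω) (Z k ω)
  have hint : ∀ k, Integrable (fun ω => specialLambda (Z k ω)) P := fun k =>
    (hZ.integrable k).mono (continuous_specialLambda.comp_aestronglyMeasurable
      (hZ.integrable k).aestronglyMeasurable) (ae_of_all _ fun _ => abs_specialLambda_le _)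
  have hsub : {ω | ∃ k ≤ n, ε < |Z k ω - Z 0 ω|} ⊆
      {ω | ∃ k ≤ n, M ≤ |Z k ω|} ∪ {ω | ∃ k ≤ n, exp (-M) * (ε ^ 2 / 2) ≤ D k ω} := by
    rintro ω ⟨k, hk, hεk⟩
    refine or_iff_not_imp_left.2 fun hω => ⟨k, hk, ?_⟩
    simp only [Set.mem_ofPred_eq, not_exists, not_and, not_le] at hω
    calc exp (-M) * (ε ^ 2 / 2) ≤ exp (-M) * ((Z k ω - Z 0 ω) ^ 2 / 2) := by
          gcongr exp (-M) * (?_ / 2)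
          rw [← sq_abs (Z k ω - Z 0 ω)]
          exact pow_le_pow_left₀ hε.le hεk.le 2
      _ ≤ D k ω := exp_neg_mul_sq_le_bregmanDiv_specialLambda (hω 0 n.zero_le).le (hω k hk).le
  refine (measure_mono hsub).trans ((measure_union_le _ _).trans (add_le_add ?_ ?_))
  · exact hZ.submartingale_abs.measure_exists_le_le (fun _ _ => abs_nonneg _) hM n
  · rw [← hZ.integral_bregmanDiv measurable_specialLambdaDeriv abs_specialLambdaDeriv_le_one hint n]
    exact (hZ.submartingale_bregmanDiv continuous_specialLambda.measurable
      measurable_specialLambdaDeriv abs_specialLambdaDeriv_le_one bregmanDiv_specialLambda_nonneg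
      hint).measure_exists_le_le (fun _ _ => bregmanDiv_specialLambda_nonneg _ _) (by positivity) n

end MeasureTheory

theorem martingale_maximal_inequality
    {Ω : Type*} {m0 : MeasurableSpace Ω} {P : Measure Ω} [IsProbabilityMeasure P]
    (ℱ : Filtration ℕ m0) (Z : ℕ → Ω → ℝ) (hZ : Martingale Z ℱ P)
    (n : ℕ) (ε : ℝ) (hε : 0 < ε)
    (h : (∫ ω, specialLambda (Z n ω) ∂P) - (∫ ω, specialLambda (Z 0 ω) ∂P) <
      (1 / 6) * ε ^ 3 *
        Real.exp (-(3 / ε) * max (∫ ω, |Z 0 ω| ∂P) (∫ ω, |Z n ω| ∂P))) :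
    P {ω | ∃ k ≤ n, ε < |Z k ω - Z 0 ω|} < ENNReal.ofReal ε := by
  set Mbar := max (∫ ω, |Z 0 ω| ∂P) (∫ ω, |Z n ω| ∂P)
  set c := ∫ ω, specialLambda (Z n ω) ∂P - ∫ ω, specialLambda (Z 0 ω) ∂P
  obtain ⟨M, hMbar, hcM⟩ : ∃ M, 3 / ε * Mbar < M ∧ c < 1 / 6 * ε ^ 3 * exp (-M) := by
    refine Eventually.exists_gt (p := fun M => c < 1 / 6 * ε ^ 3 * exp (-M)) ?_
    refine (Continuous.tendsto (by fun_prop) _).eventually (lt_mem_nhds ?_)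
    simpa [neg_mul] using h
  have hM : 0 < M := lt_of_le_of_lt (by positivity) hMbar
  have hZn : (∫ ω, |Z n ω| ∂P) / M ≤ ε / 3 := by
    rw [div_le_iff₀ hM]
    calc ∫ ω, |Z n ω| ∂P ≤ Mbar := le_max_right _ _
      _ = ε / 3 * (3 / ε * Mbar) := by field_simp
      _ ≤ ε / 3 * M := by gcongr
  have hc : c / (exp (-M) * (ε ^ 2 / 2)) < ε / 3 := by
    rw [div_lt_iff₀ (by positivity)]
    linarith
  calc P {ω | ∃ k ≤ n, ε < |Z k ω - Z 0 ω|}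
      ≤ ENNReal.ofReal ((∫ ω, |Z n ω| ∂P) / M) + ENNReal.ofReal (c / (exp (-M) * (ε ^ 2 / 2))) :=
        hZ.measure_exists_lt_abs_sub_le hM hε n
    _ < ENNReal.ofReal (ε / 3) + ENNReal.ofReal (ε / 3) :=
        ENNReal.add_lt_add_of_le_of_lt ENNReal.ofReal_ne_top (ENNReal.ofReal_le_ofReal hZn)
          ((ENNReal.ofReal_lt_ofReal_iff (by positivity)).2 hc)
    _ ≤ ENNReal.ofReal ε := by
        rw [← ENNReal.ofReal_add (by positivity) (by positivity)]
        exact ENNReal.ofReal_le_ofReal (by linarith)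
end

section
/- (Reflection principle) Let B be a standard one-dimensional Brownian motion started at 0, and let t > 0 and λ > 0. Then P( sup_{s ∈ [0,t]} B_s ≥ λ ) = 2(1 − Φ(λ/√t)), where Φ is the standard normal cumulative distribution function. -/
open MeasureTheory Filter ProbabilityTheory

/-- A standard one-dimensional Brownian motion started at `0`. -/
structure IsBrownianMotion1 {Ω : Type*} [MeasurableSpace Ω] (P : Measure Ω)
    (B : ℝ → Ω → ℝ) : Prop where
  stronglyMeasurable : ∀ t, StronglyMeasurable (B t)
  init : ∀ ω, B 0 ω = 0
  cont : ∀ ω, Continuous fun t => B t ω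
  gauss : ∀ s t : ℝ, 0 ≤ s → s ≤ t →
    P.map (fun ω => B t ω - B s ω) = gaussianReal 0 ((t - s).toNNReal)
  indepIncr : ∀ (n : ℕ) (t : Fin (n + 1) → ℝ), Monotone t → 0 ≤ t 0 →
    iIndepFun
      (fun (k : Fin n) ω => B (t k.succ) ω - B (t k.castSucc) ω) P

/-- The standard normal cumulative distribution function. -/
noncomputable def stdNormalCDF (x : ℝ) : ℝ := (gaussianReal 0 1 (Set.Iic x)).toReal

/-!
For a random walk with symmetric i.i.d. steps, reflecting every step
after the first passage above `ℓ` preserves the law of the walk and sends the endpoint `S n` to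
`2 S k - S n`. Hence `P(max S ≥ ℓ) ≤ 2 P(S n ≥ ℓ)` and, up to the probability that the walk
overshoots `ℓ` by more than `δ` at its first passage, `2 P(S n > ℓ + 2δ) ≤ P(max S ≥ ℓ)`.

The increments of `B` along the grid `j t / n` form such a walk with `N(0, t/n)` steps. The
overshoot error is at most `n P(N(0, t/n) > δ)`, which vanishes as `n → ∞` by a Chernoff bound,
and by continuity of paths the dyadic grids exhaust the event `sup_{[0,t]} B ≥ λ`, at the price of
lowering the level slightly. Continuity of `Φ` closes the gap between the levels.
-/

open Function
open scoped ENNReal NNReal Topology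

lemma measure_inter_lt_add_measure_inter_le {α : Type*} [MeasurableSpace α] (μ : Measure α)
    {f : α → ℝ} (hf : Measurable f) (s : Set α) (c : ℝ) :
    μ (s ∩ {x | f x < c}) + μ (s ∩ {x | c ≤ f x}) = μ s := by
  rw [← measure_inter_add_sdiff s (measurableSet_lt hf measurable_const)]
  congr 2
  ext x; simp

namespace RandomWalk

open Finset

variable {n : ℕ}

noncomputable def partialSum (j : ℕ) (x : Fin n → ℝ) : ℝ :=
  ∑ i : Fin n with i.val < j, x i

def reflectFrom (k : ℕ) (x : Fin n → ℝ) : Fin n → ℝ :=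
  fun i => if i.val < k then x i else -x i

def firstPassageAt (ℓ : ℝ) (k : ℕ) : Set (Fin n → ℝ) :=
  {x | (∀ j < k, partialSum j x < ℓ) ∧ ℓ ≤ partialSum k x}

def reachesLevel (ℓ : ℝ) : Set (Fin n → ℝ) :=
  {x | ∃ j ≤ n, ℓ ≤ partialSum j x}

@[fun_prop]
lemma measurable_partialSum (j : ℕ) : Measurable (partialSum (n := n) j) := by
  unfold partialSum; fun_prop

@[simp]
lemma partialSum_zero (x : Fin n → ℝ) : partialSum 0 x = 0 := by simp [partialSum]

lemma partialSum_succ (i : Fin n) (x : Fin n → ℝ) :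
    partialSum (i + 1) x = partialSum i x + x i := by
  have : univ.filter (fun j : Fin n => j.val < i + 1)
      = insert i (univ.filter fun j : Fin n => j.val < i) := by
    ext j; simp [le_iff_lt_or_eq, Fin.ext_iff]; omega
  rw [partialSum, this, sum_insert (by simp), add_comm, partialSum]

lemma partialSum_reflectFrom_of_le {j k : ℕ} (hjk : j ≤ k) (x : Fin n → ℝ) :
    partialSum j (reflectFrom k x) = partialSum j x :=
  sum_congr rfl fun _ hi => if_pos ((mem_filter.1 hi).2.trans_le hjk)

lemma partialSum_reflectFrom_of_ge {j k : ℕ} (hkj : k ≤ j) (x : Fin n → ℝ) :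
    partialSum j (reflectFrom k x) = 2 * partialSum k x - partialSum j x := by
  simp only [partialSum, sum_filter, reflectFrom, mul_sum, ← sum_sub_distrib]
  refine sum_congr rfl fun i _ => ?_
  by_cases hik : (i : ℕ) < k
  · simp [hik, hik.trans_le hkj]; ring
  · by_cases hij : (i : ℕ) < j <;> simp [hik, hij]

lemma measurePreserving_reflectFrom {κ : Measure ℝ} [SigmaFinite κ]
    (hκ : MeasurePreserving (fun x => -x) κ κ) (k : ℕ) :
    MeasurePreserving (reflectFrom (n := n) k) (Measure.pi fun _ => κ) (Measure.pi fun _ => κ) := by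
  have h := measurePreserving_pi (fun _ : Fin n => κ) (fun _ => κ)
    (f := fun i => if (i : ℕ) < k then id else fun x => -x)
    (fun i => by split_ifs; exacts [.id κ, hκ])
  convert h using 2 with x
  ext i; unfold reflectFrom; split_ifs <;> rfl

lemma measurableSet_firstPassageAt (ℓ : ℝ) (k : ℕ) :
    MeasurableSet (firstPassageAt (n := n) ℓ k) := by
  have : firstPassageAt (n := n) ℓ k
      = (⋂ j ∈ Finset.range k, {x | partialSum j x < ℓ}) ∩ {x | ℓ ≤ partialSum k x} := by
    ext x; simp [firstPassageAt]
  rw [this]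
  exact (MeasurableSet.biInter (Finset.range k).countable_toSet
    fun j _ => measurableSet_lt (by fun_prop) measurable_const).inter
    (measurableSet_le measurable_const (by fun_prop))

lemma pairwise_disjoint_firstPassageAt (ℓ : ℝ) :
    Pairwise (Disjoint on (firstPassageAt (n := n) ℓ)) := by
  refine pairwise_disjoint_on _ |>.2 fun k k' hkk' => Set.disjoint_left.2 ?_
  rintro x ⟨_, hk⟩ ⟨hk', _⟩
  exact (hk' k hkk').not_ge hk

lemma reachesLevel_eq_biUnion (ℓ : ℝ) :
    reachesLevel (n := n) ℓ = ⋃ k ∈ Finset.range (n + 1), firstPassageAt ℓ k := by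
  ext x
  simp only [reachesLevel, firstPassageAt, Set.mem_ofPred_eq, Set.mem_iUnion, Finset.mem_range,
    Nat.lt_succ_iff, exists_prop]
  constructor
  · rintro ⟨j, hj, hx⟩
    have hex : ∃ m, ℓ ≤ partialSum m x := ⟨j, hx⟩
    exact ⟨Nat.find hex, (Nat.find_min' hex hx).trans hj,
      fun i hi => not_le.1 (Nat.find_min hex hi), Nat.find_spec hex⟩
  · rintro ⟨k, hk, _, hx⟩
    exact ⟨k, hk, hx⟩

lemma measurableSet_reachesLevel (ℓ : ℝ) : MeasurableSet (reachesLevel (n := n) ℓ) := by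
  rw [reachesLevel_eq_biUnion]
  exact .biUnion (Finset.range (n + 1)).countable_toSet
    fun k _ => measurableSet_firstPassageAt ℓ k

lemma measure_reachesLevel_inter (μ : Measure (Fin n → ℝ)) (ℓ : ℝ) {T : Set (Fin n → ℝ)}
    (hT : MeasurableSet T) :
    μ (reachesLevel ℓ ∩ T) = ∑ k ∈ Finset.range (n + 1), μ (firstPassageAt ℓ k ∩ T) := by
  rw [reachesLevel_eq_biUnion, Set.iUnion₂_inter, measure_biUnion_finset]
  · exact fun k _ k' _ hkk' => ((pairwise_disjoint_firstPassageAt ℓ hkk').mono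
      Set.inter_subset_left Set.inter_subset_left)
  · exact fun k _ => (measurableSet_firstPassageAt ℓ k).inter hT

lemma reflectFrom_preimage_firstPassageAt (ℓ : ℝ) (k : ℕ) :
    reflectFrom k ⁻¹' firstPassageAt (n := n) ℓ k = firstPassageAt ℓ k := by
  ext x
  simp only [firstPassageAt, Set.mem_preimage, Set.mem_ofPred_eq,
    partialSum_reflectFrom_of_le le_rfl]
  refine and_congr_left' (forall₂_congr fun j hj => ?_)
  rw [partialSum_reflectFrom_of_le hj.le]

section Reflection

variable {κ : Measure ℝ}

local notation "ν" => Measure.pi fun _ : Fin n => κ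

lemma measure_firstPassageAt_inter_preimage_reflectFrom [SigmaFinite κ]
    (hκ : MeasurePreserving (fun x => -x) κ κ) (ℓ : ℝ) (k : ℕ) {T : Set (Fin n → ℝ)}
    (hT : MeasurableSet T) :
    ν (firstPassageAt ℓ k ∩ reflectFrom k ⁻¹' T) = ν (firstPassageAt ℓ k ∩ T) := by
  rw [← (measurePreserving_reflectFrom hκ k).measure_preimage
    ((measurableSet_firstPassageAt ℓ k).inter hT).nullMeasurableSet, Set.preimage_inter,
    reflectFrom_preimage_firstPassageAt]

lemma measure_firstPassageAt_inter_lt_le [SigmaFinite κ]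
    (hκ : MeasurePreserving (fun x => -x) κ κ) {ℓ : ℝ} {k : ℕ} (hk : k ≤ n) :
    ν (firstPassageAt ℓ k ∩ {x | partialSum n x < ℓ})
      ≤ ν (firstPassageAt ℓ k ∩ {x | ℓ ≤ partialSum n x}) := by
  rw [← measure_firstPassageAt_inter_preimage_reflectFrom hκ ℓ k
    (measurableSet_lt (by fun_prop) measurable_const)]
  refine measure_mono fun x ⟨hx, hxT⟩ => ⟨hx, ?_⟩
  simp only [Set.mem_preimage, Set.mem_ofPred_eq, partialSum_reflectFrom_of_ge hk] at hxT ⊢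
  linarith [hx.2]

lemma measure_firstPassageAt_inter_add_lt_le [SigmaFinite κ]
    (hκ : MeasurePreserving (fun x => -x) κ κ) {ℓ δ : ℝ} {k : ℕ} (hk : k ≤ n) :
    ν (firstPassageAt ℓ k ∩ {x | ℓ + 2 * δ < partialSum n x})
      ≤ ν (firstPassageAt ℓ k ∩ {x | partialSum n x < ℓ})
        + ν (firstPassageAt ℓ k ∩ {x | ℓ + δ < partialSum k x}) := by
  rw [← measure_firstPassageAt_inter_preimage_reflectFrom hκ ℓ k
    (measurableSet_lt (by fun_prop) measurable_const)]
  refine (measure_mono ?_).trans (measure_union_le _ _)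
  rintro x ⟨hx, hxT⟩
  by_cases hover : ℓ + δ < partialSum k x
  · exact Or.inr ⟨hx, hover⟩
  · refine Or.inl ⟨hx, ?_⟩
    simp only [Set.mem_preimage, Set.mem_ofPred_eq, partialSum_reflectFrom_of_ge hk] at hxT ⊢
    linarith

lemma sum_measure_firstPassageAt_overshoot_le [IsProbabilityMeasure κ] {ℓ : ℝ} (hℓ : 0 < ℓ)
    (δ : ℝ) :
    ∑ k ∈ range (n + 1), ν (firstPassageAt ℓ k ∩ {x | ℓ + δ < partialSum k x})
      ≤ n * κ (Set.Ioi δ) := by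
  have hstart : firstPassageAt (n := n) ℓ 0 = ∅ := by
    ext x; simp [firstPassageAt, hℓ.not_ge]
  have hstep (i : Fin n) :
      ν (firstPassageAt ℓ (i + 1) ∩ {x | ℓ + δ < partialSum (i + 1) x}) ≤ κ (Set.Ioi δ) := by
    rw [← (measurePreserving_eval (fun _ : Fin n => κ) i).measure_preimage
      measurableSet_Ioi.nullMeasurableSet]
    refine measure_mono fun x ⟨hx, hover⟩ => ?_
    have hbefore := hx.1 i i.val.lt_succ_self
    simp only [Set.mem_ofPred_eq, partialSum_succ] at hover
    simp only [Set.mem_preimage, Function.eval, Set.mem_Ioi]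
    linarith
  calc ∑ k ∈ range (n + 1), ν (firstPassageAt ℓ k ∩ {x | ℓ + δ < partialSum k x})
      = ∑ i : Fin n, ν (firstPassageAt ℓ (i + 1) ∩ {x | ℓ + δ < partialSum (i + 1) x}) := by
        rw [sum_range_succ', hstart, Set.empty_inter, measure_empty, add_zero,
          ← Fin.sum_univ_eq_sum_range (fun k => ν (firstPassageAt ℓ (k + 1) ∩ _))]
    _ ≤ ∑ _i : Fin n, κ (Set.Ioi δ) := sum_le_sum fun i _ => hstep i
    _ = n * κ (Set.Ioi δ) := by simp

theorem measure_reachesLevel_le [SigmaFinite κ] (hκ : MeasurePreserving (fun x => -x) κ κ)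
    (ℓ : ℝ) :
    ν (reachesLevel ℓ) ≤ 2 * ν {x | ℓ ≤ partialSum n x} := by
  calc ν (reachesLevel ℓ)
      = ∑ k ∈ range (n + 1), ν (firstPassageAt ℓ k) := by
        simpa using measure_reachesLevel_inter ν ℓ MeasurableSet.univ
    _ ≤ ∑ k ∈ range (n + 1), 2 * ν (firstPassageAt ℓ k ∩ {x | ℓ ≤ partialSum n x}) := by
        refine sum_le_sum fun k hk => ?_
        rw [← measure_inter_lt_add_measure_inter_le ν (measurable_partialSum n) _ ℓ, two_mul]
        exact add_le_add
          (measure_firstPassageAt_inter_lt_le hκ (Nat.lt_succ_iff.1 (mem_range.1 hk))) le_rfl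
    _ = 2 * ν (reachesLevel ℓ ∩ {x | ℓ ≤ partialSum n x}) := by
        rw [measure_reachesLevel_inter ν ℓ (measurableSet_le measurable_const (by fun_prop)),
          mul_sum]
    _ ≤ 2 * ν {x | ℓ ≤ partialSum n x} := by gcongr; exact Set.inter_subset_right

theorem two_mul_measure_lt_le_measure_reachesLevel_add [IsProbabilityMeasure κ]
    (hκ : MeasurePreserving (fun x => -x) κ κ) {ℓ δ : ℝ} (hℓ : 0 < ℓ) (hδ : 0 ≤ δ) :
    2 * ν {x | ℓ + 2 * δ < partialSum n x} ≤ ν (reachesLevel ℓ) + n * κ (Set.Ioi δ) := by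
  set U := {x : Fin n → ℝ | ℓ + 2 * δ < partialSum n x}
  have hU : MeasurableSet U := measurableSet_lt measurable_const (by fun_prop)
  have hUle : U ⊆ {x | ℓ ≤ partialSum n x} :=
    fun x (hx : ℓ + 2 * δ < _) => show ℓ ≤ _ by linarith
  have hreach : {x | ℓ ≤ partialSum n x} ⊆ reachesLevel ℓ := fun x hx => ⟨n, le_rfl, hx⟩
  have hbelow : ν U ≤ ν (reachesLevel ℓ ∩ {x | partialSum n x < ℓ}) + n * κ (Set.Ioi δ) := by
    calc ν U = ∑ k ∈ range (n + 1), ν (firstPassageAt ℓ k ∩ U) := by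
          rw [← measure_reachesLevel_inter ν ℓ hU, Set.inter_eq_right.2 (hUle.trans hreach)]
      _ ≤ ∑ k ∈ range (n + 1), (ν (firstPassageAt ℓ k ∩ {x | partialSum n x < ℓ})
            + ν (firstPassageAt ℓ k ∩ {x | ℓ + δ < partialSum k x})) :=
          sum_le_sum fun k hk =>
            measure_firstPassageAt_inter_add_lt_le hκ (Nat.lt_succ_iff.1 (mem_range.1 hk))
      _ ≤ ν (reachesLevel ℓ ∩ {x | partialSum n x < ℓ}) + n * κ (Set.Ioi δ) := by
          rw [sum_add_distrib, ← measure_reachesLevel_inter ν ℓ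
            (measurableSet_lt (by fun_prop) measurable_const)]
          gcongr
          exact sum_measure_firstPassageAt_overshoot_le hℓ δ
  have habove : ν U ≤ ν (reachesLevel ℓ ∩ {x | ℓ ≤ partialSum n x}) := by
    rw [Set.inter_eq_right.2 hreach]
    exact measure_mono hUle
  calc 2 * ν U = ν U + ν U := two_mul _
    _ ≤ ν (reachesLevel ℓ ∩ {x | partialSum n x < ℓ}) + n * κ (Set.Ioi δ)
        + ν (reachesLevel ℓ ∩ {x | ℓ ≤ partialSum n x}) := add_le_add hbelow habove
    _ = ν (reachesLevel ℓ) + n * κ (Set.Ioi δ) := by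
        rw [add_right_comm, measure_inter_lt_add_measure_inter_le ν (measurable_partialSum n)]

end Reflection

end RandomWalk

open Set RandomWalk

lemma measurePreserving_neg_gaussianReal (v : ℝ≥0) :
    MeasurePreserving (fun x => -x) (gaussianReal 0 v) (gaussianReal 0 v) :=
  ⟨measurable_neg, by simpa using gaussianReal_map_neg (μ := 0) (v := v)⟩

lemma continuous_cdf (μ : Measure ℝ) [IsProbabilityMeasure μ] [NullSingletonClass μ] :
    Continuous (cdf μ) := by
  refine continuous_iff_continuousAt.2 fun x => ?_
  rw [(monotone_cdf μ).continuousAt_iff_leftLim_eq_rightLim, StieltjesFunction.rightLim_eq]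
  have hjump := (cdf μ).measure_singleton x
  rw [measure_cdf, measure_singleton, eq_comm, ENNReal.ofReal_eq_zero, sub_nonpos] at hjump
  exact le_antisymm ((monotone_cdf μ).leftLim_le le_rfl) hjump

lemma stdNormalCDF_eq_cdf : stdNormalCDF = cdf (gaussianReal 0 1) := by
  ext x
  rw [cdf_eq_real]
  rfl

lemma continuous_stdNormalCDF : Continuous stdNormalCDF := by
  have := nullSingletonClass_gaussianReal (μ := 0) one_ne_zero
  rw [stdNormalCDF_eq_cdf]
  exact continuous_cdf _

lemma gaussianReal_Ioi_eq_one_sub_stdNormalCDF {v : ℝ} (hv : 0 < v) (c : ℝ) :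
    gaussianReal 0 v.toNNReal (Ioi c)
      = ENNReal.ofReal (1 - stdNormalCDF (c / Real.sqrt v)) := by
  have hsqrt : 0 < Real.sqrt v := Real.sqrt_pos.2 hv
  have hscale : (gaussianReal 0 1).map (Real.sqrt v * ·) = gaussianReal 0 v.toNNReal := by
    rw [gaussianReal_map_const_mul, mul_zero, mul_one]
    congr 1
    rw [← NNReal.coe_inj]
    simp [hv.le]
  have hpre : (Real.sqrt v * ·) ⁻¹' Ioi c = (Iic (c / Real.sqrt v))ᶜ := by
    ext x
    simp [div_lt_iff₀' hsqrt]
  rw [← hscale, Measure.map_apply (measurable_const_mul _) measurableSet_Ioi, hpre,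
    prob_compl_eq_one_sub measurableSet_Iic, stdNormalCDF_eq_cdf,
    ENNReal.ofReal_sub _ (cdf_nonneg _ _), ENNReal.ofReal_one, ofReal_cdf]

lemma gaussianReal_Ici_eq_one_sub_stdNormalCDF {v : ℝ} (hv : 0 < v) (c : ℝ) :
    gaussianReal 0 v.toNNReal (Ici c)
      = ENNReal.ofReal (1 - stdNormalCDF (c / Real.sqrt v)) := by
  have := nullSingletonClass_gaussianReal (μ := 0) (Real.toNNReal_pos.2 hv).ne'
  rw [← gaussianReal_Ioi_eq_one_sub_stdNormalCDF hv, measure_congr Ioi_ae_eq_Ici.symm]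

lemma gaussianReal_Ioi_le_exp (v : ℝ≥0) {δ : ℝ} (hδ : 0 ≤ δ) :
    gaussianReal 0 v (Ioi δ) ≤ ENNReal.ofReal (Real.exp (-δ ^ 2 / (2 * v))) := by
  have hsub : HasSubgaussianMGF id v (gaussianReal 0 v) :=
    ⟨integrable_exp_mul_gaussianReal, fun s => by simp [mgf_id_gaussianReal]⟩
  calc gaussianReal 0 v (Ioi δ) ≤ gaussianReal 0 v {x | δ ≤ id x} :=
        measure_mono fun x (hx : δ < x) => hx.le
    _ = ENNReal.ofReal ((gaussianReal 0 v).real {x | δ ≤ id x}) := by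
        rw [ofReal_measureReal]
    _ ≤ _ := ENNReal.ofReal_le_ofReal (hsub.measure_ge_le hδ)

lemma tendsto_natCast_mul_gaussianReal_Ioi {t δ : ℝ} (ht : 0 < t) (hδ : 0 < δ) :
    Tendsto (fun n : ℕ => (n : ℝ≥0∞) * gaussianReal 0 (t / n).toNNReal (Ioi δ)) atTop (𝓝 0) := by
  have hb : 0 < δ ^ 2 / (2 * t) := by positivity
  have hlim : Tendsto (fun n : ℕ => (n : ℝ) * Real.exp (-(δ ^ 2 / (2 * t)) * n)) atTop (𝓝 0) := by
    simpa [Function.comp_def] using (tendsto_rpow_mul_exp_neg_mul_atTop_nhds_zero 1 _ hb).comp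
      tendsto_natCast_atTop_atTop
  refine tendsto_of_tendsto_of_tendsto_of_le_of_le' tendsto_const_nhds
    (ENNReal.ofReal_zero ▸ ENNReal.tendsto_ofReal hlim) (.of_forall fun _ => zero_le) ?_
  filter_upwards [eventually_gt_atTop 0] with n hn
  calc (n : ℝ≥0∞) * gaussianReal 0 (t / n).toNNReal (Ioi δ)
      ≤ n * ENNReal.ofReal (Real.exp (-δ ^ 2 / (2 * (t / n).toNNReal))) := by
        gcongr; exact gaussianReal_Ioi_le_exp _ hδ.le
    _ = ENNReal.ofReal (n * Real.exp (-(δ ^ 2 / (2 * t)) * n)) := by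
        rw [ENNReal.ofReal_mul (by positivity), ENNReal.ofReal_natCast,
          Real.coe_toNNReal _ (by positivity)]
        congr 3
        field_simp

lemma exists_nat_mul_div_le_lt {t s : ℝ} (ht : 0 < t) (hs : s ∈ Icc 0 t) {n : ℕ} (hn : n ≠ 0) :
    ∃ j ≤ n, j * t / n ≤ s ∧ s < j * t / n + t / n := by
  have hn' : (0 : ℝ) < n := Nat.cast_pos.2 (Nat.pos_of_ne_zero hn)
  have hq : 0 ≤ s * n / t := by have := hs.1; positivity
  refine ⟨⌊s * n / t⌋₊, ?_, ?_, ?_⟩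
  · refine Nat.floor_le_of_le ?_
    rw [div_le_iff₀ ht]
    nlinarith [hs.2]
  · rw [div_le_iff₀ hn', ← le_div_iff₀ ht]
    exact Nat.floor_le hq
  · rw [← add_div, ← add_one_mul, lt_div_iff₀ hn', ← div_lt_iff₀ ht]
    exact Nat.lt_floor_add_one _

namespace IsBrownianMotion1

variable {Ω : Type*} {B : ℝ → Ω → ℝ}

noncomputable def gridIncrements (B : ℝ → Ω → ℝ) (t : ℝ) (n : ℕ) (ω : Ω) : Fin n → ℝ :=
  fun i => B ((i + 1) * t / n) ω - B (i * t / n) ω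

def gridHits (B : ℝ → Ω → ℝ) (t : ℝ) (n : ℕ) (ℓ : ℝ) : Set Ω :=
  {ω | ∃ j ≤ n, ℓ ≤ B (j * t / n) ω}

lemma gridHits_subset {t : ℝ} (ht : 0 ≤ t) (n : ℕ) (ℓ : ℝ) :
    gridHits B t n ℓ ⊆ {ω | ∃ s ∈ Icc 0 t, ℓ ≤ B s ω} := by
  rintro ω ⟨j, hj, hℓ⟩
  refine ⟨j * t / n, ⟨by positivity, ?_⟩, hℓ⟩
  rcases eq_or_ne n 0 with rfl | hn
  · simpa using ht
  · rw [div_le_iff₀ (Nat.cast_pos.2 (Nat.pos_of_ne_zero hn)), mul_comm t]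
    gcongr

lemma monotone_gridHits_two_pow (t ℓ : ℝ) : Monotone fun m => gridHits B t (2 ^ m) ℓ := by
  refine monotone_nat_of_le_succ fun m => ?_
  rintro ω ⟨j, hj, hℓ⟩
  refine ⟨2 * j, by rw [pow_succ]; omega, ?_⟩
  convert hℓ using 2
  push_cast
  field_simp
  ring

variable [MeasurableSpace Ω] {P : Measure Ω}

lemma measurable_gridIncrements (hB : IsBrownianMotion1 P B) (t : ℝ) (n : ℕ) :
    Measurable (gridIncrements B t n) :=
  measurable_pi_lambda _ fun _ =>
    (hB.stronglyMeasurable _).measurable.sub (hB.stronglyMeasurable _).measurable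

lemma partialSum_gridIncrements (hB : IsBrownianMotion1 P B) (t : ℝ) {n j : ℕ} (hj : j ≤ n)
    (ω : Ω) : partialSum j (gridIncrements B t n ω) = B (j * t / n) ω := by
  induction j with
  | zero => simp [hB.init]
  | succ j ih =>
    rw [show j = ((⟨j, hj⟩ : Fin n) : ℕ) from rfl, partialSum_succ, ih (by omega), gridIncrements]
    push_cast
    ring


lemma partialSum_gridIncrements_self (hB : IsBrownianMotion1 P B) (t : ℝ) {n : ℕ} (hn : n ≠ 0)
    (ω : Ω) : partialSum n (gridIncrements B t n ω) = B t ω := by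
  rw [partialSum_gridIncrements hB t le_rfl, mul_div_cancel_left₀ _ (Nat.cast_ne_zero.2 hn)]

lemma gridHits_eq_preimage (hB : IsBrownianMotion1 P B) (t : ℝ) (n : ℕ) (ℓ : ℝ) :
    gridHits B t n ℓ = gridIncrements B t n ⁻¹' reachesLevel ℓ := by
  ext ω
  refine exists_congr fun j => and_congr_right fun hj => ?_
  rw [partialSum_gridIncrements hB t hj]

lemma map_eq_gaussianReal (hB : IsBrownianMotion1 P B) {t : ℝ} (ht : 0 ≤ t) :
    P.map (B t) = gaussianReal 0 t.toNNReal := by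
  simpa [hB.init] using hB.gauss 0 t le_rfl ht

lemma setOf_exists_le_subset_iUnion_gridHits (hB : IsBrownianMotion1 P B) {t ℓ lam : ℝ}
    (ht : 0 < t) (hℓ : ℓ < lam) :
    {ω | ∃ s ∈ Icc 0 t, lam ≤ B s ω} ⊆ ⋃ m, gridHits B t (2 ^ m) ℓ := by
  rintro ω ⟨s, hs, hlam⟩
  obtain ⟨η, hη, hclose⟩ :=
    Metric.continuousAt_iff.1 (hB.cont ω).continuousAt (lam - ℓ) (sub_pos.2 hℓ)
  obtain ⟨m, hm⟩ := pow_unbounded_of_one_lt (t / η) one_lt_two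
  have hmesh : t / 2 ^ m < η := by rwa [div_lt_comm₀ (by positivity) hη]
  obtain ⟨j, hj, hjs, hsj⟩ := exists_nat_mul_div_le_lt ht hs (pow_ne_zero m two_ne_zero)
  set u : ℝ := j * t / (2 ^ m : ℕ)
  have hBu := hclose (x := u) (by
    rw [Real.dist_eq, abs_lt]; push_cast at hsj ⊢; constructor <;> linarith)
  rw [Real.dist_eq, abs_lt] at hBu
  exact mem_iUnion.2 ⟨m, j, hj, by linarith [hBu.1]⟩

lemma measure_setOf_le_eq (hB : IsBrownianMotion1 P B) {t : ℝ} (ht : 0 < t) (c : ℝ) :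
    P {ω | c ≤ B t ω} = ENNReal.ofReal (1 - stdNormalCDF (c / Real.sqrt t)) := by
  rw [← gaussianReal_Ici_eq_one_sub_stdNormalCDF ht, ← map_eq_gaussianReal hB ht.le,
    Measure.map_apply (hB.stronglyMeasurable t).measurable measurableSet_Ici]
  rfl

lemma measure_setOf_lt_eq (hB : IsBrownianMotion1 P B) {t : ℝ} (ht : 0 < t) (c : ℝ) :
    P {ω | c < B t ω} = ENNReal.ofReal (1 - stdNormalCDF (c / Real.sqrt t)) := by
  rw [← gaussianReal_Ioi_eq_one_sub_stdNormalCDF ht, ← map_eq_gaussianReal hB ht.le,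
    Measure.map_apply (hB.stronglyMeasurable t).measurable measurableSet_Ioi]
  rfl

variable [IsProbabilityMeasure P]

lemma map_gridIncrements (hB : IsBrownianMotion1 P B) {t : ℝ} (ht : 0 ≤ t) (n : ℕ) :
    P.map (gridIncrements B t n) = Measure.pi fun _ => gaussianReal 0 (t / n).toNNReal := by
  have hmono : Monotone fun k : Fin (n + 1) => (k : ℝ) * t / n := fun k k' hkk' => by
    dsimp only
    gcongr
    exact_mod_cast hkk'
  have hindep := hB.indepIncr n _ hmono (by simp)
  simp only [Fin.val_succ, Fin.val_castSucc, Nat.cast_add, Nat.cast_one] at hindep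
  have hmeas (i : Fin n) : Measurable fun ω => B ((i + 1) * t / n) ω - B (i * t / n) ω :=
    (hB.stronglyMeasurable _).measurable.sub (hB.stronglyMeasurable _).measurable
  change P.map (fun ω (i : Fin n) => B ((i + 1) * t / n) ω - B (i * t / n) ω) = _
  rw [(iIndepFun_iff_map_fun_eq_pi_map fun i => (hmeas i).aemeasurable).1 hindep]
  refine congrArg Measure.pi (funext fun i => ?_)
  rw [hB.gauss _ _ (by positivity) (by gcongr; exact (lt_add_one _).le)]
  congr 2
  ring

lemma measure_preimage_gridIncrements (hB : IsBrownianMotion1 P B) {t : ℝ} (ht : 0 ≤ t)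
    {n : ℕ} {S : Set (Fin n → ℝ)} (hS : MeasurableSet S) :
    P (gridIncrements B t n ⁻¹' S) = Measure.pi (fun _ => gaussianReal 0 (t / n).toNNReal) S := by
  rw [← Measure.map_apply (measurable_gridIncrements hB t n) hS, map_gridIncrements hB ht]

lemma measure_gridHits_le (hB : IsBrownianMotion1 P B) {t : ℝ} (ht : 0 ≤ t) {n : ℕ}
    (hn : n ≠ 0) (ℓ : ℝ) :
    P (gridHits B t n ℓ) ≤ 2 * P {ω | ℓ ≤ B t ω} := by
  have hend : {ω | ℓ ≤ B t ω} = gridIncrements B t n ⁻¹' {x | ℓ ≤ partialSum n x} := by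
    ext ω; simp [partialSum_gridIncrements_self hB t hn]
  rw [hend, gridHits_eq_preimage hB, measure_preimage_gridIncrements hB ht
    (measurableSet_reachesLevel ℓ), measure_preimage_gridIncrements hB ht
    (measurableSet_le measurable_const (by fun_prop))]
  exact measure_reachesLevel_le (measurePreserving_neg_gaussianReal _) ℓ

lemma two_mul_measure_lt_le_measure_gridHits_add (hB : IsBrownianMotion1 P B) {t : ℝ}
    (ht : 0 ≤ t) {n : ℕ} (hn : n ≠ 0) {ℓ δ : ℝ} (hℓ : 0 < ℓ) (hδ : 0 ≤ δ) :
    2 * P {ω | ℓ + 2 * δ < B t ω}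
      ≤ P (gridHits B t n ℓ) + n * gaussianReal 0 (t / n).toNNReal (Ioi δ) := by
  have hend : {ω | ℓ + 2 * δ < B t ω}
      = gridIncrements B t n ⁻¹' {x | ℓ + 2 * δ < partialSum n x} := by
    ext ω; simp [partialSum_gridIncrements_self hB t hn]
  rw [hend, gridHits_eq_preimage hB, measure_preimage_gridIncrements hB ht
    (measurableSet_reachesLevel ℓ), measure_preimage_gridIncrements hB ht
    (measurableSet_lt measurable_const (by fun_prop))]
  exact two_mul_measure_lt_le_measure_reachesLevel_add
    (measurePreserving_neg_gaussianReal _) hℓ hδ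

lemma measure_setOf_exists_le_le (hB : IsBrownianMotion1 P B) {t ℓ lam : ℝ} (ht : 0 < t)
    (hℓ : ℓ < lam) :
    P {ω | ∃ s ∈ Icc 0 t, lam ≤ B s ω} ≤ 2 * P {ω | ℓ ≤ B t ω} :=
  calc P {ω | ∃ s ∈ Icc 0 t, lam ≤ B s ω}
      ≤ P (⋃ m, gridHits B t (2 ^ m) ℓ) :=
        measure_mono (setOf_exists_le_subset_iUnion_gridHits hB ht hℓ)
    _ = ⨆ m, P (gridHits B t (2 ^ m) ℓ) := (monotone_gridHits_two_pow t ℓ).measure_iUnion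
    _ ≤ 2 * P {ω | ℓ ≤ B t ω} :=
        iSup_le fun m => measure_gridHits_le hB ht.le (pow_ne_zero m two_ne_zero) ℓ

lemma two_mul_measure_lt_le_measure_setOf_exists (hB : IsBrownianMotion1 P B) {t ℓ lam : ℝ}
    (ht : 0 < t) (hlam : 0 < lam) (hℓ : lam < ℓ) :
    2 * P {ω | ℓ < B t ω} ≤ P {ω | ∃ s ∈ Icc 0 t, lam ≤ B s ω} := by
  set δ := (ℓ - lam) / 2
  have hδ : 0 < δ := by simp only [δ]; linarith
  have hbound (n : ℕ) (hn : n ≠ 0) : 2 * P {ω | ℓ < B t ω}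
      ≤ P {ω | ∃ s ∈ Icc 0 t, lam ≤ B s ω} + n * gaussianReal 0 (t / n).toNNReal (Ioi δ) := by
    have h := two_mul_measure_lt_le_measure_gridHits_add hB ht.le hn hlam hδ.le
    rw [show lam + 2 * δ = ℓ by simp only [δ]; ring] at h
    exact h.trans (add_le_add (measure_mono (gridHits_subset ht.le n lam)) le_rfl)
  refine ge_of_tendsto (by simpa using
    (tendsto_natCast_mul_gaussianReal_Ioi ht hδ).const_add (P {ω | ∃ s ∈ Icc 0 t, lam ≤ B s ω}))
    ?_
  filter_upwards [eventually_ne_atTop 0] with n hn using hbound n hn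

end IsBrownianMotion1

theorem reflection_principle
    {Ω : Type*} [MeasurableSpace Ω] (P : Measure Ω) [IsProbabilityMeasure P]
    (B : ℝ → Ω → ℝ) (hB : IsBrownianMotion1 P B)
    (t lam : ℝ) (ht : 0 < t) (hlam : 0 < lam) :
    P {ω | ∃ s ∈ Set.Icc (0 : ℝ) t, lam ≤ B s ω}
      = ENNReal.ofReal (2 * (1 - stdNormalCDF (lam / Real.sqrt t))) := by
  set G : ℝ → ℝ≥0∞ := fun c => 2 * ENNReal.ofReal (1 - stdNormalCDF (c / Real.sqrt t))
  have hG : Tendsto G (𝓝 lam) (𝓝 (G lam)) :=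
    ((ENNReal.continuous_const_mul ENNReal.ofNat_ne_top).comp (ENNReal.continuous_ofReal.comp
      (continuous_const.sub (continuous_stdNormalCDF.comp (continuous_id.div_const _))))).tendsto
      lam
  have hupper : P {ω | ∃ s ∈ Icc 0 t, lam ≤ B s ω} ≤ G lam := by
    refine ge_of_tendsto (hG.mono_left (nhdsWithin_le_nhds (s := Iio lam))) ?_
    filter_upwards [self_mem_nhdsWithin] with ℓ (hℓ : ℓ < lam)
    simp only [G, ← hB.measure_setOf_le_eq ht]
    exact hB.measure_setOf_exists_le_le ht hℓ
  have hlower : G lam ≤ P {ω | ∃ s ∈ Icc 0 t, lam ≤ B s ω} := by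
    refine le_of_tendsto (hG.mono_left (nhdsWithin_le_nhds (s := Ioi lam))) ?_
    filter_upwards [self_mem_nhdsWithin] with ℓ (hℓ : lam < ℓ)
    simp only [G, ← hB.measure_setOf_lt_eq ht]
    exact hB.two_mul_measure_lt_le_measure_setOf_exists ht hlam hℓ
  rw [le_antisymm hupper hlower, ENNReal.ofReal_mul zero_le_two, ENNReal.ofReal_ofNat]
end

section
/- Let B be a standard Brownian motion in ℝ^m started at 0, let x ∈ ℝ^m, let a > ‖x‖, and let τ_{x,a} be the first exit time of B^x = x + B from the open ball D_{0,a}. Then for every t > 0, P( τ_{x,a} > t ) ≤ 2Φ( (‖x‖ + a)/√t ) − 1, where Φ is the standard normal cumulative distribution function. In particular, the family of first exit times {τ_{x,a} : ‖x‖ ≤ r̄, a ∈ (r̄, r̃)} is tight, for any 0 < r̄ < r̃. -/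
open MeasureTheory Metric Filter ProbabilityTheory

noncomputable def sphereMeasure (m : ℕ) (y : EuclideanSpace ℝ (Fin m)) (r : ℝ) :
    Measure (EuclideanSpace ℝ (Fin m)) :=
  (Measure.hausdorffMeasure ((m : ℝ) - 1)).restrict (Metric.sphere y r)

noncomputable def uniformSphere (m : ℕ) (y : EuclideanSpace ℝ (Fin m)) (r : ℝ) :
    Measure (EuclideanSpace ℝ (Fin m)) :=
  (sphereMeasure m y r Set.univ)⁻¹ • sphereMeasure m y r

def HarmonicOn {m : ℕ} (u : EuclideanSpace ℝ (Fin m) → ℝ)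
    (A : Set (EuclideanSpace ℝ (Fin m))) : Prop :=
  ContDiffOn ℝ 2 u A ∧ ∀ x ∈ A,
    (∑ i : Fin m, fderiv ℝ (fun w => fderiv ℝ u w (EuclideanSpace.single i 1)) x
      (EuclideanSpace.single i 1)) = 0

structure IsBrownianMotion {Ω : Type*} [MeasurableSpace Ω] (P : Measure Ω)
    {m : ℕ} (B : ℝ → Ω → EuclideanSpace ℝ (Fin m)) : Prop where
  stronglyMeasurable : ∀ t, StronglyMeasurable (B t)
  init : ∀ ω, B 0 ω = 0
  cont : ∀ ω, Continuous fun t => B t ω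
  gauss : ∀ (i : Fin m) (s t : ℝ), 0 ≤ s → s ≤ t →
    P.map (fun ω => B t ω i - B s ω i) = gaussianReal 0 ((t - s).toNNReal)
  indepCoords : ∀ (s t : ℝ), 0 ≤ s → s ≤ t →
    iIndepFun (fun (i : Fin m) ω => B t ω i - B s ω i) P
  indepIncr : ∀ (n : ℕ) (t : Fin (n + 1) → ℝ), Monotone t → 0 ≤ t 0 →
    iIndepFun
      (fun (k : Fin n) ω => B (t k.succ) ω - B (t k.castSucc) ω) P

noncomputable def exitTime {Ω : Type*} {m : ℕ}
    (B : ℝ → Ω → EuclideanSpace ℝ (Fin m)) (r : ℝ) (ω : Ω) : ℝ :=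
  sInf {t : ℝ | 0 ≤ t ∧ r ≤ ‖B t ω‖}

/-!
On `{t < τ}` the path has not left the ball by time `t`, so its first coordinate satisfies
`|x₁ + B¹_t| < a`, hence `|B¹_t| < ‖x‖ + a`; as `B¹_t ~ N(0, t)`, the probability of this is
`2Φ((‖x‖ + a)/√t) - 1`. Since the standard normal density is at most `1/2`, `2Φ(u) - 1 ≤ u`,
which bounds the tail uniformly by `(‖x‖ + a)/√t` and gives tightness.
-/

open Set
open scoped NNReal

lemma gaussianReal_map_sqrt_mul (v : ℝ≥0) :
    (gaussianReal 0 1).map (√(v : ℝ) * ·) = gaussianReal 0 v := by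
  rw [gaussianReal_map_const_mul, mul_zero, mul_one]
  congr 1
  ext
  simp

lemma gaussianReal_zero_Ioc_neg_self {v : ℝ≥0} (hv : v ≠ 0) (c : ℝ) :
    gaussianReal 0 v (Ioc (-c) c) = gaussianReal 0 1 (Ioc (-(c / √(v : ℝ))) (c / √(v : ℝ))) := by
  have hs : 0 < √(v : ℝ) := by positivity
  rw [← gaussianReal_map_sqrt_mul, Measure.map_apply (measurable_const_mul _) measurableSet_Ioc]
  congr 1
  ext z
  simp only [mem_preimage, mem_Ioc, ← neg_div, div_lt_iff₀' hs, le_div_iff₀' hs]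

lemma stdNormalCDF_neg (u : ℝ) : stdNormalCDF (-u) = 1 - stdNormalCDF u := by
  have := nullSingletonClass_gaussianReal (μ := 0) one_ne_zero
  have hsymm : gaussianReal 0 1 (Iic (-u)) = gaussianReal 0 1 (Ioi u) := by
    conv_lhs => rw [← neg_zero, ← gaussianReal_map_neg,
      Measure.map_apply measurable_neg measurableSet_Iic]
    rw [neg_preimage, neg_Iic, neg_neg, measure_congr Ioi_ae_eq_Ici]
  change (gaussianReal 0 1).real (Iic (-u)) = 1 - (gaussianReal 0 1).real (Iic u)
  rw [measureReal_def, hsymm, ← compl_Iic, ← measureReal_def, measureReal_compl measurableSet_Iic,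
    probReal_univ]

lemma gaussianReal_zero_one_Ioc_neg_self {u : ℝ} (hu : 0 ≤ u) :
    gaussianReal 0 1 (Ioc (-u) u) = ENNReal.ofReal (2 * stdNormalCDF u - 1) := by
  have hIic : stdNormalCDF (-u) = stdNormalCDF u - (gaussianReal 0 1).real (Ioc (-u) u) := by
    rw [stdNormalCDF, ← measureReal_def, ← Iic_sdiff_Ioc_self_of_le (by linarith : -u ≤ u),
      measureReal_sdiff Ioc_subset_Iic_self measurableSet_Ioc]
    rfl
  rw [← ofReal_measureReal]
  congr 1
  linarith [stdNormalCDF_neg u]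

lemma gaussianPDFReal_le (μ : ℝ) (v : ℝ≥0) (x : ℝ) :
    gaussianPDFReal μ v x ≤ (√(2 * Real.pi * v))⁻¹ := by
  rw [gaussianPDFReal_def]
  refine mul_le_of_le_one_right (by positivity) (Real.exp_le_one_iff.2 ?_)
  rw [neg_div]
  exact neg_nonpos.2 (by positivity)

lemma gaussianReal_le_mul_volume (μ : ℝ) {v : ℝ≥0} (hv : v ≠ 0) (s : Set ℝ) :
    gaussianReal μ v s ≤ ENNReal.ofReal (√(2 * Real.pi * v))⁻¹ * volume s := by
  rw [gaussianReal_apply μ hv, ← setLIntegral_const]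
  exact lintegral_mono fun x ↦ ENNReal.ofReal_le_ofReal (gaussianPDFReal_le μ v x)

lemma two_mul_stdNormalCDF_sub_one_le {u : ℝ} (hu : 0 ≤ u) : 2 * stdNormalCDF u - 1 ≤ u := by
  have hpi : 2 ≤ √(2 * Real.pi * (1 : ℝ≥0)) := by
    rw [NNReal.coe_one, mul_one, Real.le_sqrt zero_le_two (by positivity)]
    linarith [Real.pi_gt_three]
  have hlen : 0 ≤ u - -u := by linarith
  have h := gaussianReal_le_mul_volume 0 one_ne_zero (Ioc (-u) u)
  rw [gaussianReal_zero_one_Ioc_neg_self hu, Real.volume_Ioc, ← ENNReal.ofReal_mul (by positivity),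
    ENNReal.ofReal_le_ofReal_iff (by positivity)] at h
  calc 2 * stdNormalCDF u - 1 ≤ (√(2 * Real.pi * (1 : ℝ≥0)))⁻¹ * (u - -u) := h
    _ ≤ 2⁻¹ * (u - -u) := by gcongr
    _ = u := by ring

lemma norm_lt_of_lt_exitTime {Ω : Type*} {m : ℕ} {X : ℝ → Ω → EuclideanSpace ℝ (Fin m)}
    {a t : ℝ} {ω : Ω} (ht : 0 ≤ t) (h : t < exitTime X a ω) : ‖X t ω‖ < a := by
  by_contra! hle
  exact h.not_ge (csInf_le ⟨0, fun _ hs ↦ hs.1⟩ ⟨ht, hle⟩)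

namespace IsBrownianMotion

variable {Ω : Type*} [MeasurableSpace Ω] {P : Measure Ω} {m : ℕ}
  {B : ℝ → Ω → EuclideanSpace ℝ (Fin m)}

lemma measurable_apply (hB : IsBrownianMotion P B) (t : ℝ) (i : Fin m) :
    Measurable fun ω ↦ B t ω i :=
  (EuclideanSpace.proj i).continuous.measurable.comp (hB.stronglyMeasurable t).measurable

lemma map_apply_eq_gaussianReal (hB : IsBrownianMotion P B) (i : Fin m) {t : ℝ} (ht : 0 ≤ t) :
    P.map (fun ω ↦ B t ω i) = gaussianReal 0 t.toNNReal := by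
  simpa [hB.init] using hB.gauss i 0 t le_rfl ht

lemma measure_lt_exitTime_le (hB : IsBrownianMotion P B) (i : Fin m)
    (x : EuclideanSpace ℝ (Fin m)) (a : ℝ) {t : ℝ} (ht : 0 ≤ t) :
    P {ω | t < exitTime (fun s ω ↦ x + B s ω) a ω}
      ≤ gaussianReal 0 t.toNNReal (Ioc (-(‖x‖ + a)) (‖x‖ + a)) := by
  have hsub : {ω | t < exitTime (fun s ω ↦ x + B s ω) a ω}
      ⊆ (fun ω ↦ B t ω i) ⁻¹' Ioc (-(‖x‖ + a)) (‖x‖ + a) := by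
    intro ω hω
    have hball : ‖x + B t ω‖ < a := norm_lt_of_lt_exitTime (X := fun s ω ↦ x + B s ω) ht hω
    have hcoord : |B t ω i| < ‖x‖ + a := by
      calc |B t ω i| = ‖(x + B t ω) i - x i‖ := by simp
        _ ≤ ‖x + B t ω‖ + ‖x‖ := (norm_sub_le _ _).trans
            (add_le_add (PiLp.norm_apply_le _ i) (PiLp.norm_apply_le _ i))
        _ < a + ‖x‖ := by gcongr
        _ = ‖x‖ + a := add_comm _ _
    exact ⟨(abs_lt.1 hcoord).1, (abs_lt.1 hcoord).2.le⟩
  calc P {ω | t < exitTime (fun s ω ↦ x + B s ω) a ω}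
      ≤ P ((fun ω ↦ B t ω i) ⁻¹' Ioc (-(‖x‖ + a)) (‖x‖ + a)) := measure_mono hsub
    _ = gaussianReal 0 t.toNNReal (Ioc (-(‖x‖ + a)) (‖x‖ + a)) := by
      rw [← hB.map_apply_eq_gaussianReal i ht,
        Measure.map_apply (hB.measurable_apply t i) measurableSet_Ioc]

lemma measure_lt_exitTime_le_stdNormalCDF (hB : IsBrownianMotion P B) (i : Fin m)
    (x : EuclideanSpace ℝ (Fin m)) {a t : ℝ} (ha : 0 ≤ a) (ht : 0 < t) :
    P {ω | t < exitTime (fun s ω ↦ x + B s ω) a ω}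
      ≤ ENNReal.ofReal (2 * stdNormalCDF ((‖x‖ + a) / √t) - 1) := by
  have hv : t.toNNReal ≠ 0 := by simpa using ht
  calc P {ω | t < exitTime (fun s ω ↦ x + B s ω) a ω}
      ≤ gaussianReal 0 t.toNNReal (Ioc (-(‖x‖ + a)) (‖x‖ + a)) :=
        hB.measure_lt_exitTime_le i x a ht.le
    _ = gaussianReal 0 1 (Ioc (-((‖x‖ + a) / √t)) ((‖x‖ + a) / √t)) := by
        rw [gaussianReal_zero_Ioc_neg_self hv, Real.coe_toNNReal _ ht.le]
    _ = ENNReal.ofReal (2 * stdNormalCDF ((‖x‖ + a) / √t) - 1) :=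
        gaussianReal_zero_one_Ioc_neg_self (by positivity)

lemma measure_lt_exitTime_le_div_sqrt (hB : IsBrownianMotion P B) (i : Fin m)
    (x : EuclideanSpace ℝ (Fin m)) {a t : ℝ} (ha : 0 ≤ a) (ht : 0 < t) :
    P {ω | t < exitTime (fun s ω ↦ x + B s ω) a ω} ≤ ENNReal.ofReal ((‖x‖ + a) / √t) :=
  (hB.measure_lt_exitTime_le_stdNormalCDF i x ha ht).trans
    (ENNReal.ofReal_le_ofReal (two_mul_stdNormalCDF_sub_one_le (by positivity)))

end IsBrownianMotion

theorem exit_time_tail_bound_and_tightness_general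
    {Ω : Type*} [MeasurableSpace Ω] (P : Measure Ω)
    {m : ℕ} (hm : 1 ≤ m) (B : ℝ → Ω → EuclideanSpace ℝ (Fin m))
    (hB : IsBrownianMotion P B) :
    (∀ (x : EuclideanSpace ℝ (Fin m)) (a : ℝ), ‖x‖ < a → ∀ t : ℝ, 0 < t →
      P {ω | t < exitTime (fun s ω => x + B s ω) a ω}
        ≤ ENNReal.ofReal (2 * stdNormalCDF ((‖x‖ + a) / Real.sqrt t) - 1)) ∧
    (∀ rb rt : ℝ, 0 < rb → rb < rt → ∀ ε : ℝ, 0 < ε → ∃ T : ℝ, 0 < T ∧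
      ∀ (x : EuclideanSpace ℝ (Fin m)) (a : ℝ), ‖x‖ ≤ rb → a ∈ Set.Ioo rb rt →
        P {ω | T < exitTime (fun s ω => x + B s ω) a ω} ≤ ENNReal.ofReal ε) := by
  let i : Fin m := ⟨0, hm⟩
  refine ⟨fun x a hxa t ht ↦
    hB.measure_lt_exitTime_le_stdNormalCDF i x ((norm_nonneg x).trans hxa.le) ht, ?_⟩
  intro rb rt hrb hrt ε hε
  have hsum : 0 < rb + rt := by linarith
  refine ⟨((rb + rt) / ε) ^ 2, by positivity, fun x a hx ha ↦ ?_⟩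
  have hsqrt : √(((rb + rt) / ε) ^ 2) = (rb + rt) / ε := Real.sqrt_sq (by positivity)
  refine (hB.measure_lt_exitTime_le_div_sqrt i x (hrb.le.trans ha.1.le) (by positivity)).trans
    (ENNReal.ofReal_le_ofReal ?_)
  calc (‖x‖ + a) / √(((rb + rt) / ε) ^ 2) ≤ (rb + rt) / ((rb + rt) / ε) := by
        rw [hsqrt]
        gcongr
        linarith [ha.2]
    _ = ε := div_div_cancel₀ hsum.ne'

theorem exit_time_tail_bound_and_tightness
    {Ω : Type*} [MeasurableSpace Ω] (P : Measure Ω) [IsProbabilityMeasure P]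
    {m : ℕ} (hm : 1 ≤ m) (B : ℝ → Ω → EuclideanSpace ℝ (Fin m))
    (hB : IsBrownianMotion P B) :
    (∀ (x : EuclideanSpace ℝ (Fin m)) (a : ℝ), ‖x‖ < a → ∀ t : ℝ, 0 < t →
      P {ω | t < exitTime (fun s ω => x + B s ω) a ω}
        ≤ ENNReal.ofReal (2 * stdNormalCDF ((‖x‖ + a) / Real.sqrt t) - 1)) ∧
    (∀ rb rt : ℝ, 0 < rb → rb < rt → ∀ ε : ℝ, 0 < ε → ∃ T : ℝ, 0 < T ∧
      ∀ (x : EuclideanSpace ℝ (Fin m)) (a : ℝ), ‖x‖ ≤ rb → a ∈ Set.Ioo rb rt →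
        P {ω | T < exitTime (fun s ω => x + B s ω) a ω} ≤ ENNReal.ofReal ε) :=
  exit_time_tail_bound_and_tightness_general P hm B hB
end

section
/- Let A be an open subset of ℝ^m, let u be a bounded continuous function on A satisfying the mean value property on balls (u(y) = (1/ν_{m,r}) ∫_{D̄_{y,r}} u(x) dx whenever D̄_{y,r} ⊆ A), and let r > 0. Then u has continuous derivatives of order k + 1 on the set A_r := {y ∈ A : D̄_{y,r} ⊆ A} for every k ≥ 1; in particular, u is infinitely differentiable on A_r. -/
open MeasureTheory Metric Filter ProbabilityTheory

/-! Convolving `u` (cut off outside a closed ball in `A`) with a smooth radial kernel `φ`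
supported in the ball of radius `δ` reproduces `u` at every point `y` whose closed `δ`-ball lies
in `A`. Indeed, by Fubini (the layer-cake formula) `∫ φ (y - x) u x dx` is the integral over
`t > 0` of the integrals of `u` over the superlevel sets `{x | t < φ (y - x)}`; for a kernel with
strictly decreasing radial profile these are balls centred at `y`, over which `u` averages to
`u y`. A convolution of a smooth compactly supported kernel with a locally integrable function is
smooth. -/

open Set
open scoped ContDiff Convolution

theorem integral_mul_eq_integral_setIntegral_superlevel {X : Type*} [MeasurableSpace X]
    {μ : Measure X} [SFinite μ] {κ w : X → ℝ} (hκ : Measurable κ) (hκ0 : ∀ x, 0 ≤ κ x)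
    (hw : AEStronglyMeasurable w μ) (hκw : Integrable (fun x => κ x * w x) μ) :
    ∫ x, κ x * w x ∂μ = ∫ t in Ioi 0, ∫ x in {x | t < κ x}, w x ∂μ := by
  set S : Set (X × ℝ) := {p | p.2 < κ p.1}
  have hS : MeasurableSet S := measurableSet_lt measurable_snd (hκ.comp measurable_fst)
  set F : X × ℝ → ℝ := S.indicator fun p => w p.1
  have hF_apply (x : X) (t : ℝ) : F (x, t) = (Iio (κ x)).indicator (fun _ => w x) t := by
    simp only [F, S, indicator_apply, mem_ofPred_eq, mem_Iio]
  have slice_t (x : X) (c : ℝ) :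
      ∫ t in Ioi 0, (Iio (κ x)).indicator (fun _ => c) t = κ x * c := by
    rw [integral_indicator_const _ measurableSet_Iio, measureReal_restrict_apply measurableSet_Iio,
      Iio_inter_Ioi, Real.volume_real_Ioo_of_le (hκ0 x), sub_zero, smul_eq_mul]
  have hF : Integrable F (μ.prod (volume.restrict (Ioi 0))) := by
    have hFm : AEStronglyMeasurable F (μ.prod (volume.restrict (Ioi 0))) :=
      (hw.comp_quasiMeasurePreserving Measure.quasiMeasurePreserving_fst).indicator hS
    refine (integrable_prod_iff hFm).2 ⟨Eventually.of_forall fun x => ?_, ?_⟩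
    · simp only [hF_apply]
      exact (integrable_indicator_iff measurableSet_Iio).2 (integrableOn_const (by
        rw [Measure.restrict_apply measurableSet_Iio, Iio_inter_Ioi]
        exact measure_Ioo_lt_top.ne))
    · simp only [hF_apply, norm_indicator_eq_indicator_norm, slice_t]
      exact hκw.norm.congr (Eventually.of_forall fun x => by simp [abs_of_nonneg (hκ0 x)])
  calc ∫ x, κ x * w x ∂μ = ∫ x, (∫ t in Ioi (0 : ℝ), F (x, t)) ∂μ := by
        simp only [hF_apply, slice_t]
    _ = ∫ t in Ioi 0, ∫ x, F (x, t) ∂μ := integral_integral_swap hF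
    _ = ∫ t in Ioi 0, ∫ x in {x | t < κ x}, w x ∂μ := by
      congr 1 with t
      rw [← integral_indicator (measurableSet_lt measurable_const hκ)]
      simp only [F, S, indicator_apply, mem_ofPred_eq]

theorem integral_mul_eq_mul_integral_of_superlevel_average {X : Type*} [MeasurableSpace X]
    {μ : Measure X} [SFinite μ] {κ w : X → ℝ} (hκ : Measurable κ) (hκ0 : ∀ x, 0 ≤ κ x)
    (hw : AEStronglyMeasurable w μ) (hκw : Integrable (fun x => κ x * w x) μ)
    (hκi : Integrable κ μ) (c : ℝ)
    (havg : ∀ t, 0 < t → ∫ x in {x | t < κ x}, w x ∂μ = c * μ.real {x | t < κ x}) :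
    ∫ x, κ x * w x ∂μ = c * ∫ x, κ x ∂μ := by
  have hvol := integral_mul_eq_integral_setIntegral_superlevel (w := fun _ => (1 : ℝ)) hκ hκ0
    aestronglyMeasurable_const (by simpa using hκi)
  simp only [mul_one, setIntegral_const, smul_eq_mul] at hvol
  rw [integral_mul_eq_integral_setIntegral_superlevel hκ hκ0 hw hκw,
    setIntegral_congr_fun measurableSet_Ioi havg, integral_const_mul, hvol]

theorem expNegInvGlue_strictMonoOn : StrictMonoOn expNegInvGlue (Ici 0) := by
  intro a ha b _ hab
  rcases (mem_Ici.1 ha).eq_or_lt with rfl | ha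
  · rw [expNegInvGlue.zero]
    exact expNegInvGlue.pos_of_pos hab
  · simp only [expNegInvGlue, not_le.2 ha, not_le.2 (ha.trans hab), if_false, Real.exp_lt_exp,
      neg_lt_neg_iff]
    exact inv_strictAnti₀ ha hab

theorem exists_superlevel_eq_Iio {g : ℝ → ℝ} {δ : ℝ} (hδ : 0 ≤ δ)
    (hg : ContinuousOn g (Icc 0 δ)) (hanti : StrictAntiOn g (Icc 0 δ))
    (hout : ∀ s, δ ≤ s → g s ≤ 0) {t : ℝ} (ht : 0 < t) :
    ∃ ρ ∈ Icc 0 δ, ∀ s, 0 ≤ s → (t < g s ↔ s < ρ) := by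
  by_cases htop : t < g 0
  · obtain ⟨ρ, hρ, rfl⟩ := intermediate_value_Icc' hδ hg ⟨(hout δ le_rfl).trans ht.le, htop.le⟩
    refine ⟨ρ, hρ, fun s hs => ?_⟩
    rcases le_or_gt s δ with hsδ | hsδ
    · exact hanti.lt_iff_gt hρ ⟨hs, hsδ⟩
    · exact iff_of_false ((hout s hsδ.le).trans ht.le).not_gt (hρ.2.trans_lt hsδ).not_gt
  · refine ⟨0, ⟨le_rfl, hδ⟩, fun s hs => iff_of_false (fun hts => htop ?_) hs.not_gt⟩
    rcases le_or_gt s δ with hsδ | hsδ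
    · exact hts.trans_le (hanti.antitoneOn ⟨le_rfl, hδ⟩ ⟨hs, hsδ⟩ hs)
    · exact absurd (hts.trans_le (hout s hsδ.le)) ht.not_gt

variable {E : Type*} [NormedAddCommGroup E]

noncomputable def radialBump (δ : ℝ) (z : E) : ℝ := expNegInvGlue (δ ^ 2 - ‖z‖ ^ 2)

theorem radialBump_nonneg (δ : ℝ) (z : E) : 0 ≤ radialBump δ z := expNegInvGlue.nonneg _

theorem contDiff_radialBump [InnerProductSpace ℝ E] (δ : ℝ) :
    ContDiff ℝ ∞ (radialBump (E := E) δ) :=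
  expNegInvGlue.contDiff.comp (contDiff_const.sub (contDiff_norm_sq ℝ))

theorem continuous_radialBump (δ : ℝ) : Continuous (radialBump (E := E) δ) :=
  (expNegInvGlue.contDiff (n := 0)).continuous.comp (by fun_prop)

theorem radialBump_eq_zero {δ : ℝ} {z : E} (hz : |δ| ≤ ‖z‖) : radialBump δ z = 0 :=
  expNegInvGlue.zero_of_nonpos (by nlinarith [sq_abs δ, abs_nonneg δ])

theorem radialBump_pos {δ : ℝ} {z : E} (hz : ‖z‖ < δ) : 0 < radialBump δ z :=
  expNegInvGlue.pos_of_pos (by nlinarith [norm_nonneg z])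

theorem hasCompactSupport_radialBump [ProperSpace E] (δ : ℝ) :
    HasCompactSupport (radialBump (E := E) δ) :=
  HasCompactSupport.intro (isCompact_closedBall 0 |δ|) fun _ hz =>
    radialBump_eq_zero (not_le.1 (mem_closedBall_zero_iff.not.1 hz)).le

theorem exists_radialBump_superlevel_eq_ball {δ : ℝ} (hδ : 0 ≤ δ) {t : ℝ} (ht : 0 < t) :
    ∃ ρ ∈ Icc 0 δ, ∀ z : E, t < radialBump δ z ↔ ‖z‖ < ρ := by
  have hanti : StrictAntiOn (fun s : ℝ => expNegInvGlue (δ ^ 2 - s ^ 2)) (Icc 0 δ) :=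
    fun a ha b hb hab => expNegInvGlue_strictMonoOn (mem_Ici.2 (by nlinarith [hb.1, hb.2]))
      (mem_Ici.2 (by nlinarith [ha.1, ha.2])) (by nlinarith [ha.1])
  obtain ⟨ρ, hρ, h⟩ := exists_superlevel_eq_Iio hδ
    ((expNegInvGlue.contDiff (n := 0)).continuous.comp (by fun_prop)).continuousOn hanti
    (fun s hs => (expNegInvGlue.zero_of_nonpos (by nlinarith)).le) ht
  exact ⟨ρ, hρ, fun z => h ‖z‖ (norm_nonneg z)⟩

def HasBallMeanValueOn [MeasurableSpace E] (μ : Measure E) (u : E → ℝ) (A : Set E) : Prop :=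
  ∀ y s, 0 < s → closedBall y s ⊆ A →
    u y = (μ (ball 0 s)).toReal⁻¹ * ∫ x in closedBall y s, u x ∂μ

section HaarMeasure

variable [MeasurableSpace E] [BorelSpace E] [NormedSpace ℝ E] [FiniteDimensional ℝ E]
  {μ : Measure E} [μ.IsAddHaarMeasure]

theorem ball_ae_eq_closedBall {y : E} {ρ : ℝ} (hρ : ρ ≠ 0) : ball y ρ =ᵐ[μ] closedBall y ρ :=
  ae_eq_set.2 ⟨by rw [sdiff_eq_empty.2 ball_subset_closedBall, measure_empty],
    by rw [closedBall_sdiff_ball, Measure.addHaar_sphere_of_ne_zero μ y hρ]⟩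

theorem HasBallMeanValueOn.setIntegral_ball {u : E → ℝ} {A : Set E}
    (h : HasBallMeanValueOn μ u A) {y : E} {ρ : ℝ} (hρ : 0 ≤ ρ) (hyA : closedBall y ρ ⊆ A) :
    ∫ x in ball y ρ, u x ∂μ = u y * μ.real (ball y ρ) := by
  rcases hρ.eq_or_lt with rfl | hρ
  · simp
  have hvol : 0 < μ.real (ball (0 : E) ρ) :=
    ENNReal.toReal_pos (measure_ball_pos μ 0 hρ).ne' measure_ball_lt_top.ne
  rw [setIntegral_congr_set (ball_ae_eq_closedBall hρ.ne'), measureReal_def,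
    Measure.addHaar_ball_center, h y ρ hρ hyA, ← measureReal_def]
  field_simp

theorem integral_radialBump_pos {δ : ℝ} (hδ : 0 < δ) : 0 < ∫ z, radialBump δ z ∂μ := by
  rw [integral_pos_iff_support_of_nonneg (radialBump_nonneg δ)
    ((continuous_radialBump δ).integrable_of_hasCompactSupport (hasCompactSupport_radialBump δ))]
  exact (measure_ball_pos μ 0 hδ).trans_le
    (measure_mono fun z hz => (radialBump_pos (mem_ball_zero_iff.1 hz)).ne')

theorem HasBallMeanValueOn.convolution_radialBump_eq {u : E → ℝ} {A : Set E}
    (h : HasBallMeanValueOn μ u A) {w : E → ℝ} (hw : Integrable w μ) {δ : ℝ} (hδ : 0 ≤ δ)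
    {y : E} (hyA : closedBall y δ ⊆ A) (hwu : EqOn w u (closedBall y δ)) :
    (radialBump δ ⋆[ContinuousLinearMap.lsmul ℝ ℝ, μ] w) y = u y * ∫ z, radialBump δ z ∂μ := by
  have hκc : Continuous fun x => radialBump δ (y - x) :=
    (continuous_radialBump δ).comp (continuous_const.sub continuous_id)
  obtain ⟨C, hC⟩ := (continuous_radialBump (E := E) δ).bounded_above_of_compact_support
    (hasCompactSupport_radialBump δ)
  have hκi : Integrable (fun x => radialBump δ (y - x)) μ :=
    ((continuous_radialBump δ).integrable_of_hasCompactSupport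
      (hasCompactSupport_radialBump δ)).comp_sub_left y
  rw [convolution_lsmul_swap, ← integral_sub_left_eq_self (radialBump δ) μ y]
  simp only [smul_eq_mul]
  refine integral_mul_eq_mul_integral_of_superlevel_average hκc.measurable
    (fun x => radialBump_nonneg δ _) hw.aestronglyMeasurable
    (hw.bdd_mul hκc.aestronglyMeasurable (Eventually.of_forall fun _ => hC _)) hκi (u y)
    fun t ht => ?_
  obtain ⟨ρ, hρ, hsuper⟩ := exists_radialBump_superlevel_eq_ball (E := E) hδ ht
  have hball : {x | t < radialBump δ (y - x)} = ball y ρ := by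
    ext x
    rw [mem_ofPred_eq, hsuper, mem_ball, dist_eq_norm, norm_sub_rev]
  have hρδ : closedBall y ρ ⊆ closedBall y δ := closedBall_subset_closedBall hρ.2
  rw [hball,
    setIntegral_congr_fun measurableSet_ball (hwu.mono (ball_subset_closedBall.trans hρδ)),
    h.setIntegral_ball hρ.1 (hρδ.trans hyA)]

end HaarMeasure

theorem HasBallMeanValueOn.contDiffAt [InnerProductSpace ℝ E] [FiniteDimensional ℝ E]
    [MeasurableSpace E] [BorelSpace E] {μ : Measure E} [μ.IsAddHaarMeasure]
    {u : E → ℝ} {A : Set E}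
    (h : HasBallMeanValueOn μ u A) (hc : ContinuousOn u A) {r : ℝ} (hr : 0 < r) {y₀ : E}
    (hy₀ : closedBall y₀ r ⊆ A) : ContDiffAt ℝ ∞ u y₀ := by
  set w := (closedBall y₀ r).indicator u
  have hw : Integrable w μ := (integrable_indicator_iff measurableSet_closedBall).2
    ((hc.mono hy₀).integrableOn_compact (isCompact_closedBall y₀ r))
  set c := ∫ z, radialBump (r / 2) z ∂μ
  have hc0 : c ≠ 0 := (integral_radialBump_pos (half_pos hr)).ne'
  have hsmooth : ContDiff ℝ ∞
      fun y => c⁻¹ * (radialBump (r / 2) ⋆[ContinuousLinearMap.lsmul ℝ ℝ, μ] w) y :=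
    contDiff_const.mul ((hasCompactSupport_radialBump _).contDiff_convolution_left _
      (contDiff_radialBump _) hw.locallyIntegrable)
  refine hsmooth.contDiffAt.congr_of_eventuallyEq
    (eventually_of_mem (ball_mem_nhds y₀ (half_pos hr)) fun y hy => ?_)
  have hsub : closedBall y (r / 2) ⊆ closedBall y₀ r :=
    closedBall_subset_closedBall' (by linarith [mem_ball.1 hy])
  dsimp only
  rw [h.convolution_radialBump_eq hw (half_pos hr).le (hsub.trans hy₀)
    (fun x hx => indicator_of_mem (hsub hx) u), mul_comm, mul_inv_cancel_right₀ hc0]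

theorem mean_value_property_implies_smooth_general
    {m : ℕ} (A : Set (EuclideanSpace ℝ (Fin m)))
    (u : EuclideanSpace ℝ (Fin m) → ℝ) (hc : ContinuousOn u A)
    (hmv : ∀ (y : EuclideanSpace ℝ (Fin m)) (s : ℝ), 0 < s →
      Metric.closedBall y s ⊆ A →
      u y = (volume (Metric.ball (0 : EuclideanSpace ℝ (Fin m)) s)).toReal⁻¹ *
        ∫ x in Metric.closedBall y s, u x)
    (r : ℝ) (hr : 0 < r) :
    (∀ k : ℕ, 1 ≤ k →
      ContDiffOn ℝ (k + 1) u {y ∈ A | Metric.closedBall y r ⊆ A}) ∧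
    ContDiffOn ℝ (⊤ : ℕ∞) u {y ∈ A | Metric.closedBall y r ⊆ A} := by
  have hsmooth : ContDiffOn ℝ (⊤ : ℕ∞) u {y ∈ A | closedBall y r ⊆ A} :=
    fun y hy => (HasBallMeanValueOn.contDiffAt hmv hc hr hy.2).contDiffWithinAt
  exact ⟨fun k _ => hsmooth.of_le (by exact_mod_cast le_top), hsmooth⟩

theorem mean_value_property_implies_smooth
    {m : ℕ} (hm : 2 ≤ m) (A : Set (EuclideanSpace ℝ (Fin m))) (hA : IsOpen A)
    (u : EuclideanSpace ℝ (Fin m) → ℝ) (hc : ContinuousOn u A)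
    (hb : ∃ M : ℝ, ∀ x ∈ A, |u x| ≤ M)
    (hmv : ∀ (y : EuclideanSpace ℝ (Fin m)) (s : ℝ), 0 < s →
      Metric.closedBall y s ⊆ A →
      u y = (volume (Metric.ball (0 : EuclideanSpace ℝ (Fin m)) s)).toReal⁻¹ *
        ∫ x in Metric.closedBall y s, u x)
    (r : ℝ) (hr : 0 < r) :
    (∀ k : ℕ, 1 ≤ k →
      ContDiffOn ℝ (k + 1) u {y ∈ A | Metric.closedBall y r ⊆ A}) ∧
    ContDiffOn ℝ (⊤ : ℕ∞) u {y ∈ A | Metric.closedBall y r ⊆ A} :=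
  mean_value_property_implies_smooth_general A u hc hmv r hr
end
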